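/- Let G be a Hausdorff topological group. If for every identity neighborhood U there exists a map α : G → Sym(G) with α(g)(h) ∈ U g h for all g, h ∈ G such that the subgroup Γ(α) of Sym(G) generated by the image of α acts amenably on the set G, then G is amenable as a topological group. -/

import Mathlib

/-! For each identity neighbourhood `U` choose `α_U` and a `Γ(α_U)`-invariant mean `m_U` on `ℓ∞(G)`,
and let `M` be the limit of the `m_U` along an ultrafilter on the neighbourhoods that converges to
`{1}`. Since `α_U(g)(x) ∈ U g x`, a right-uniformly continuous `f` makes `f(g ·)` and `f ∘ α_U(g)`
uniformly close once `U` is small, while `m_U (f ∘ α_U(g)) = m_U f`; in the limit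
`M (f(g ·)) = M f`. -/

/-- Bounded right-uniformly continuous real functions on a topological group. -/
def RUCb (G : Type*) [Group G] [TopologicalSpace G] : Set (G → ℝ) :=
  {f | (∃ C, ∀ x, |f x| ≤ C) ∧
    ∀ ε > (0:ℝ), ∃ U ∈ nhds (1 : G), ∀ x y : G, x * y⁻¹ ∈ U → |f x - f y| ≤ ε}

/-- A mean on a set `D` of real functions on `X`: positive, normalized, linear on `D`. -/
def IsMeanOn (X : Type*) (D : Set (X → ℝ)) (m : (X → ℝ) → ℝ) : Prop :=
  m (fun _ => 1) = 1 ∧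
  (∀ f ∈ D, ∀ g ∈ D, m (f + g) = m f + m g) ∧
  (∀ (c : ℝ), ∀ f ∈ D, m (c • f) = c * m f) ∧
  (∀ f ∈ D, (∀ x, 0 ≤ f x) → 0 ≤ m f)

/-- A topological group is amenable if `RUC_b(G)` admits a left-invariant mean. -/
def TopAmenable (G : Type*) [Group G] [TopologicalSpace G] : Prop :=
  ∃ m : (G → ℝ) → ℝ, IsMeanOn G (RUCb G) m ∧
    ∀ f ∈ RUCb G, ∀ g : G, m (fun x => f (g * x)) = m f

/-- The bounded real functions on `X` (the space `ℓ∞(X)`). -/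
def Bdd (X : Type*) : Set (X → ℝ) := {f : X → ℝ | ∃ C, ∀ x, |f x| ≤ C}

open Filter Topology

section Bounded

variable {X : Type*}

lemma bdd_const (c : ℝ) : (fun _ : X => c) ∈ Bdd X :=
  ⟨|c|, fun _ => le_rfl⟩

lemma bdd_add {f g : X → ℝ} (hf : f ∈ Bdd X) (hg : g ∈ Bdd X) : f + g ∈ Bdd X := by
  obtain ⟨C, hC⟩ := hf
  obtain ⟨D, hD⟩ := hg
  exact ⟨C + D, fun x => (abs_add_le _ _).trans (add_le_add (hC x) (hD x))⟩

lemma bdd_smul (c : ℝ) {f : X → ℝ} (hf : f ∈ Bdd X) : c • f ∈ Bdd X := by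
  obtain ⟨C, hC⟩ := hf
  refine ⟨|c| * C, fun x => ?_⟩
  rw [Pi.smul_apply, smul_eq_mul, abs_mul]
  exact mul_le_mul_of_nonneg_left (hC x) (abs_nonneg c)

lemma bdd_sub {f g : X → ℝ} (hf : f ∈ Bdd X) (hg : g ∈ Bdd X) : f - g ∈ Bdd X := by
  simpa [sub_eq_add_neg] using bdd_add hf (bdd_smul (-1) hg)

lemma bdd_comp {Y : Type*} {f : X → ℝ} (hf : f ∈ Bdd X) (σ : Y → X) : f ∘ σ ∈ Bdd Y := by
  obtain ⟨C, hC⟩ := hf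
  exact ⟨C, fun y => hC (σ y)⟩

end Bounded

namespace IsMeanOn

variable {X : Type*} {D D' : Set (X → ℝ)} {m : (X → ℝ) → ℝ}

lemma mono (hm : IsMeanOn X D m) (hD : D' ⊆ D) : IsMeanOn X D' m :=
  ⟨hm.1, fun f hf g hg => hm.2.1 f (hD hf) g (hD hg), fun c f hf => hm.2.2.1 c f (hD hf),
    fun f hf => hm.2.2.2 f (hD hf)⟩

lemma map_const (hm : IsMeanOn X (Bdd X) m) (c : ℝ) : m (fun _ => c) = c := by
  have hc : c • (fun _ : X => (1 : ℝ)) = fun _ => c := by ext; simp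
  rw [← hc, hm.2.2.1 c _ (bdd_const 1), hm.1, mul_one]

lemma map_sub (hm : IsMeanOn X (Bdd X) m) {f g : X → ℝ} (hf : f ∈ Bdd X) (hg : g ∈ Bdd X) :
    m (f - g) = m f - m g := by
  have := hm.2.1 g hg (f - g) (bdd_sub hf hg)
  rw [add_sub_cancel] at this
  linarith

lemma abs_map_le (hm : IsMeanOn X (Bdd X) m) {f : X → ℝ} {C : ℝ} (hC : ∀ x, |f x| ≤ C) :
    |m f| ≤ C := by
  have hf : f ∈ Bdd X := ⟨C, hC⟩
  have hupper := hm.2.2.2 _ (bdd_sub (bdd_const C) hf) fun x =>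
    sub_nonneg.2 (abs_le.1 (hC x)).2
  have hlower := hm.2.2.2 _ (bdd_sub hf (bdd_const (-C))) fun x =>
    sub_nonneg.2 (abs_le.1 (hC x)).1
  rw [hm.map_sub (bdd_const C) hf, hm.map_const] at hupper
  rw [hm.map_sub hf (bdd_const (-C)), hm.map_const] at hlower
  exact abs_le.2 ⟨by linarith, by linarith⟩

lemma abs_map_sub_map_le (hm : IsMeanOn X (Bdd X) m) {f g : X → ℝ} (hf : f ∈ Bdd X)
    (hg : g ∈ Bdd X) {ε : ℝ} (hε : ∀ x, |f x - g x| ≤ ε) : |m f - m g| ≤ ε := by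
  rw [← hm.map_sub hf hg]
  exact hm.abs_map_le hε

lemma abs_map_mul_left_sub_le {G : Type*} [Group G] {m : (G → ℝ) → ℝ}
    (hm : IsMeanOn G (Bdd G) m) {f : G → ℝ} (hf : f ∈ Bdd G) (g : G) {σ : G → G}
    (hσ : m (f ∘ σ) = m f) {V : Set G} (hσV : ∀ x, σ x * (g * x)⁻¹ ∈ V) {ε : ℝ}
    (hfV : ∀ x y, x * y⁻¹ ∈ V → |f x - f y| ≤ ε) :
    |m (fun x => f (g * x)) - m f| ≤ ε := by
  rw [← hσ]
  exact hm.abs_map_sub_map_le (bdd_comp hf _) (bdd_comp hf σ) fun x =>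
    abs_sub_comm (f _) _ ▸ hfV _ _ (hσV x)

end IsMeanOn

section Ultralimit

variable {X ι : Type*} (𝒰 : Ultrafilter ι) (m : ι → (X → ℝ) → ℝ)

noncomputable def ultralimitMean (f : X → ℝ) : ℝ :=
  limUnder 𝒰 fun i => m i f

variable {m}

lemma tendsto_ultralimitMean (hm : ∀ i, IsMeanOn X (Bdd X) (m i)) {f : X → ℝ}
    (hf : f ∈ Bdd X) :
    Tendsto (fun i => m i f) 𝒰 (𝓝 (ultralimitMean 𝒰 m f)) := by
  obtain ⟨C, hC⟩ := hf
  have hIcc : ↑(𝒰.map fun i => m i f) ≤ 𝓟 (Set.Icc (-C) C) :=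
    tendsto_principal.2 <| .of_forall fun i => abs_le.1 ((hm i).abs_map_le hC)
  obtain ⟨a, -, ha⟩ := isCompact_Icc.ultrafilter_le_nhds _ hIcc
  exact tendsto_nhds_limUnder ⟨a, ha⟩

lemma isMeanOn_ultralimitMean (hm : ∀ i, IsMeanOn X (Bdd X) (m i)) :
    IsMeanOn X (Bdd X) (ultralimitMean 𝒰 m) := by
  refine ⟨?_, fun f hf g hg => ?_, fun c f hf => ?_, fun f hf hpos => ?_⟩
  · refine tendsto_nhds_unique (tendsto_ultralimitMean 𝒰 hm (bdd_const 1)) ?_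
    simp only [(hm _).1, tendsto_const_nhds]
  · refine tendsto_nhds_unique (tendsto_ultralimitMean 𝒰 hm (bdd_add hf hg)) ?_
    simp only [fun i => (hm i).2.1 f hf g hg]
    exact (tendsto_ultralimitMean 𝒰 hm hf).add (tendsto_ultralimitMean 𝒰 hm hg)
  · refine tendsto_nhds_unique (tendsto_ultralimitMean 𝒰 hm (bdd_smul c hf)) ?_
    simp only [fun i => (hm i).2.2.1 c f hf]
    exact (tendsto_ultralimitMean 𝒰 hm hf).const_mul c
  · exact ge_of_tendsto' (tendsto_ultralimitMean 𝒰 hm hf) fun i => (hm i).2.2.2 f hf hpos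

end Ultralimit

lemma Filter.exists_ultrafilter_eventually_subset {α : Type*} (l : Filter α) :
    ∃ 𝒰 : Ultrafilter {s // s ∈ l}, ∀ t ∈ l, ∀ᶠ s : {s // s ∈ l} in 𝒰, (s : Set α) ⊆ t := by
  have : (l.smallSets.comap ((↑) : {s // s ∈ l} → Set α)).NeBot :=
    comap_neBot_iff_frequently.2 <| (frequently_smallSets_mem l).mono fun s hs => ⟨⟨s, hs⟩, rfl⟩
  exact ⟨Ultrafilter.of _, fun t ht =>
    Ultrafilter.of_le _ ((eventually_smallSets_subset.2 ht).comap _)⟩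

theorem stmt_17_general (G : Type*) [Group G] [TopologicalSpace G]
    (h : ∀ U ∈ nhds (1 : G), ∃ α : G → Equiv.Perm G,
      (∀ g x : G, α g x * (g * x)⁻¹ ∈ U) ∧
      ∃ m : (G → ℝ) → ℝ, IsMeanOn G (Bdd G) m ∧
        ∀ f ∈ Bdd G, ∀ γ ∈ Subgroup.closure (Set.range α),
          m (fun x => f (γ x)) = m f) :
    TopAmenable G := by
  choose α hα m hm hinv using fun U : {U : Set G // U ∈ 𝓝 (1 : G)} => h U.1 U.2
  obtain ⟨𝒰, h𝒰⟩ := (𝓝 (1 : G)).exists_ultrafilter_eventually_subset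
  have hRUCb : RUCb G ⊆ Bdd G := fun f hf => hf.1
  refine ⟨ultralimitMean 𝒰 m, (isMeanOn_ultralimitMean 𝒰 hm).mono hRUCb, fun f hf g => ?_⟩
  refine eq_of_forall_dist_le fun ε hε => ?_
  obtain ⟨V, hV, hfV⟩ := hf.2 ε hε
  refine le_of_tendsto ((tendsto_ultralimitMean 𝒰 hm (bdd_comp hf.1 (g * ·))).dist
    (tendsto_ultralimitMean 𝒰 hm hf.1)) ?_
  filter_upwards [h𝒰 V hV] with U hUV
  exact (hm U).abs_map_mul_left_sub_le hf.1 g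
    (hinv U f hf.1 _ (Subgroup.subset_closure ⟨g, rfl⟩)) (fun x => hUV (hα U g x)) hfV

/-- If for every identity neighborhood `U` of a Hausdorff topological group `G` there is
`α : G → Sym(G)` with `α(g)(h) ∈ Ugh` for all `g, h` such that the group `Γ(α)` generated by
the image of `α` acts amenably on the set `G`, then `G` is amenable. -/
theorem stmt_17 (G : Type*) [Group G] [TopologicalSpace G] [IsTopologicalGroup G] [T2Space G]
    (h : ∀ U ∈ nhds (1 : G), ∃ α : G → Equiv.Perm G,
      (∀ g x : G, α g x * (g * x)⁻¹ ∈ U) ∧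
      ∃ m : (G → ℝ) → ℝ, IsMeanOn G (Bdd G) m ∧
        ∀ f ∈ Bdd G, ∀ γ ∈ Subgroup.closure (Set.range α),
          m (fun x => f (γ x)) = m f) :
    TopAmenable G :=
  stmt_17_general G h
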